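/- arXiv:2207.02951 — 2 statements merged into one kernel-verified Lean document; each statement's English description precedes it below -/
import Mathlib

section
/- (Constantin–E–Titi commutator identity) Let ρ ∈ C_c^∞(ℝ³) be a mollifier with ρ ≥ 0, supp ρ ⊂ B(0,1), ∫ρ = 1, and ρ_ε(x) = ε⁻³ρ(x/ε). For any u ∈ L²(𝕋³; ℝ³) (viewed as a 2π-periodic locally integrable function on ℝ³), the following identity of 3×3-matrix-valued functions holds for almost every x: (u ⊗ u)_ε(x) = u_ε(x) ⊗ u_ε(x) + r_ε(u,u)(x) − (u(x) − u_ε(x)) ⊗ (u(x) − u_ε(x)), where r_ε(u,u)(x) := ∫_{ℝ³} ρ_ε(y) (δ_y u(x) ⊗ δ_y u(x)) dy and δ_y u(x) := u(x−y) − u(x); here (·)_ε denotes componentwise convolution with ρ_ε. -/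
open MeasureTheory Real

noncomputable section

/-- The periodicity cell `[0, 2π)³` of the torus `𝕋³`, as a subset of `ℝ³`. -/
def cell : Set (EuclideanSpace ℝ (Fin 3)) :=
  WithLp.ofLp ⁻¹' Set.univ.pi fun _ : Fin 3 => Set.Ico (0:ℝ) (2 * π)

/-- The rescaled mollification kernel `ρ_ε(x) = ε⁻³ ρ(x/ε)`. -/
def kernel (ρ : EuclideanSpace ℝ (Fin 3) → ℝ) (ε : ℝ)
    (y : EuclideanSpace ℝ (Fin 3)) : ℝ :=
  (ε ^ 3)⁻¹ * ρ (ε⁻¹ • y)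

/-- The (componentwise) mollification of a vector field,
`u_ε(x) = ∫ ρ_ε(y) u(x - y) dy`. -/
def mollifyVec (ρ : EuclideanSpace ℝ (Fin 3) → ℝ) (ε : ℝ)
    (u : EuclideanSpace ℝ (Fin 3) → EuclideanSpace ℝ (Fin 3))
    (x : EuclideanSpace ℝ (Fin 3)) : EuclideanSpace ℝ (Fin 3) :=
  ∫ y : EuclideanSpace ℝ (Fin 3), kernel ρ ε y • u (x - y)

abbrev E3 := EuclideanSpace ℝ (Fin 3)

lemma coord_le_norm (v : E3) (i : Fin 3) : |v i| ≤ ‖v‖ := by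
  rw [EuclideanSpace.norm_eq]
  have h1 : |v i| = Real.sqrt (‖v i‖ ^ 2) := by
    rw [Real.norm_eq_abs, Real.sqrt_sq (abs_nonneg _)]
  rw [h1]
  apply Real.sqrt_le_sqrt
  exact Finset.single_le_sum (f := fun j => ‖v j‖ ^ 2)
    (fun j _ => by positivity) (Finset.mem_univ i)

def gen (i : Fin 3) : E3 := (2*π) • (EuclideanSpace.single i (1:ℝ))

def latt (z : Fin 3 → ℤ) : E3 := z 0 • gen 0 + z 1 • gen 1 + z 2 • gen 2

lemma latt_apply (z : Fin 3 → ℤ) (i : Fin 3) : latt z i = 2 * π * z i := by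
  fin_cases i <;>
    simp [latt, gen, EuclideanSpace.single_apply, Fin.ext_iff] <;> ring

section per
variable (u : E3 → E3)
  (hu_per : ∀ (i : Fin 3) (x : E3), u (x + (2 * π) • EuclideanSpace.single i 1) = u x)

include hu_per

lemma per_zsmul (n : ℤ) (i : Fin 3) (x : E3) : u (x + n • gen i) = u x := by
  induction n using Int.induction_on with
  | zero => simp
  | succ k ih =>
      have : x + ((k : ℤ) + 1) • gen i = (x + (k:ℤ) • gen i) + gen i := by
        rw [add_smul, one_smul]; abel
      rw [this]; exact (hu_per i _).trans ih
  | pred k ih =>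
      have : x + (-(k : ℤ) - 1) • gen i + gen i = x + (-(k:ℤ)) • gen i := by
        rw [sub_smul, one_smul]; abel
      have h2 : u ((x + (-(k : ℤ) - 1) • gen i) + gen i)
          = u (x + (-(k : ℤ) - 1) • gen i) := hu_per i _
      rw [this] at h2
      exact h2.symm.trans ih

lemma per_latt (z : Fin 3 → ℤ) (x : E3) : u (latt z + x) = u x := by
  have : latt z + x = ((x + z 0 • gen 0) + z 1 • gen 1) + z 2 • gen 2 := by
    rw [latt]; abel
  rw [this, per_zsmul u hu_per, per_zsmul u hu_per, per_zsmul u hu_per]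

end per

lemma cover (x : E3) :
    x ∈ (fun y => latt (fun i => ⌊x i / (2*π)⌋) + y) '' cell := by
  refine ⟨x - latt (fun i => ⌊x i / (2*π)⌋), ?_, by simp only []; rw [add_comm, sub_add_cancel]⟩
  rw [cell, Set.mem_preimage, Set.mem_pi]
  intro i _
  have hpi : (0:ℝ) < 2 * π := by positivity
  constructor
  · have := Int.sub_floor_div_mul_nonneg (x i) hpi
    simpa [latt_apply, mul_comm] using this
  · have := Int.sub_floor_div_mul_lt (x i) hpi
    simpa [latt_apply, mul_comm] using this

lemma gsq_loc (u : E3 → E3)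
    (hu_per : ∀ (i : Fin 3) (x : E3), u (x + (2 * π) • EuclideanSpace.single i 1) = u x)
    (hu_loc : LocallyIntegrable u volume)
    (hu_L2 : MemLp u 2 (volume.restrict cell)) :
    LocallyIntegrable (fun t => ‖u t‖^2) volume := by
  have hcellint : IntegrableOn (fun t => ‖u t‖^2) cell volume := by
    have h := hu_L2.integrable_norm_rpow two_ne_zero ENNReal.ofNat_ne_top
    have h2 : ENNReal.toReal 2 = ((2:ℕ):ℝ) := by simp
    rw [h2] at h
    simpa [Real.rpow_natCast, IntegrableOn] using h
  have htrans : ∀ z : Fin 3 → ℤ,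
      IntegrableOn (fun t => ‖u t‖^2) ((fun y => latt z + y) '' cell) volume := by
    intro z
    have hmp : MeasurePreserving (fun y => latt z + y) volume volume :=
      measurePreserving_add_left volume (latt z)
    have hemb : MeasurableEmbedding (fun y : E3 => latt z + y) :=
      (MeasurableEquiv.addLeft (latt z)).measurableEmbedding
    rw [MeasurePreserving.integrableOn_image hmp hemb]
    have : ((fun t => ‖u t‖^2) ∘ (fun y : E3 => latt z + y)) = fun t => ‖u t‖^2 := by
      funext y; simp [Function.comp, per_latt u hu_per]
    rw [this]; exact hcellint
  rw [locallyIntegrable_iff]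
  intro K hK
  obtain ⟨R, hR⟩ := hK.isBounded.subset_closedBall 0
  set N : ℤ := ⌈R⌉ ⊔ 1 with hN
  have hRN : R ≤ (N:ℝ) := le_trans (Int.le_ceil R) (by exact_mod_cast le_max_left _ _)
  have hpi1 : (1:ℝ) ≤ 2 * π := by nlinarith [pi_gt_three]
  have hsub : K ⊆ ⋃ z ∈ Fintype.piFinset (fun _ : Fin 3 => Finset.Icc (-N) N),
      (fun y => latt z + y) '' cell := by
    intro x hx
    have hxR : ‖x‖ ≤ R := by simpa [Metric.mem_closedBall, dist_zero_right] using hR hx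
    refine Set.mem_biUnion ?_ (cover x)
    show (fun i => ⌊x i / (2*π)⌋) ∈ Fintype.piFinset (fun _ : Fin 3 => Finset.Icc (-N) N)
    rw [Fintype.mem_piFinset]
    intro i
    have hb : |x i / (2*π)| ≤ R := by
      rw [abs_div, abs_of_pos (by positivity : (0:ℝ) < 2*π)]
      calc |x i| / (2*π) ≤ |x i| := div_le_self (abs_nonneg _) hpi1
        _ ≤ ‖x‖ := coord_le_norm x i
        _ ≤ R := hxR
    rw [Finset.mem_Icc]
    constructor
    · rw [Int.le_floor]
      push_cast
      have := abs_le.1 hb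
      linarith [this.1]
    · have h1 : (⌊x i / (2*π)⌋ : ℝ) ≤ x i / (2*π) := Int.floor_le _
      have := abs_le.1 hb
      exact_mod_cast h1.trans (this.2.trans hRN)
  exact (integrableOn_finset_iUnion.2 fun z _ => htrans z).mono_set hsub

/-- Constantin–E–Titi commutator identity: for `u ∈ L²(𝕋³;ℝ³)`
(a `2π`-periodic, locally integrable field which is square integrable on a
periodicity cell), for a.e. `x` and all `i j`,
`(u ⊗ u)_ε = u_ε ⊗ u_ε + r_ε(u,u) − (u − u_ε) ⊗ (u − u_ε)`,
where `r_ε(u,u)(x) = ∫ ρ_ε(y) δ_y u(x) ⊗ δ_y u(x) dy`, `δ_y u(x) = u(x−y) − u(x)`. -/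
theorem constantin_e_titi_commutator
    (ρ : EuclideanSpace ℝ (Fin 3) → ℝ)
    (hρ_smooth : ContDiff ℝ (⊤ : ℕ∞) ρ)
    (hρ_nonneg : ∀ x, 0 ≤ ρ x)
    (hρ_supp : Function.support ρ ⊆ Metric.ball 0 1)
    (hρ_int : ∫ x : EuclideanSpace ℝ (Fin 3), ρ x = 1)
    (ε : ℝ) (hε : ε ∈ Set.Ioc (0:ℝ) 1)
    (u : EuclideanSpace ℝ (Fin 3) → EuclideanSpace ℝ (Fin 3))
    (hu_per : ∀ (i : Fin 3) (x : EuclideanSpace ℝ (Fin 3)),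
      u (x + (2 * π) • EuclideanSpace.single i 1) = u x)
    (hu_loc : LocallyIntegrable u volume)
    (hu_L2 : MemLp u 2 (volume.restrict cell)) :
    ∀ᵐ x : EuclideanSpace ℝ (Fin 3) ∂volume, ∀ i j : Fin 3,
      (∫ y : EuclideanSpace ℝ (Fin 3),
          kernel ρ ε y * (u (x - y) i * u (x - y) j)) =
        mollifyVec ρ ε u x i * mollifyVec ρ ε u x j
        + (∫ y : EuclideanSpace ℝ (Fin 3),
            kernel ρ ε y * ((u (x - y) i - u x i) * (u (x - y) j - u x j)))
        - (u x i - mollifyVec ρ ε u x i) * (u x j - mollifyVec ρ ε u x j) := by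
  obtain ⟨hε0, hε1⟩ := hε
  have hK_cont : Continuous (kernel ρ ε) :=
    continuous_const.mul (hρ_smooth.continuous.comp (continuous_id.const_smul ε⁻¹))
  have hK_supp : ∀ y, kernel ρ ε y ≠ 0 → ‖y‖ ≤ ε := by
    intro y h
    have h1 : ρ (ε⁻¹ • y) ≠ 0 := fun h0 => h (by simp [kernel, h0])
    have h2 := hρ_supp (Function.mem_support.2 h1)
    rw [Metric.mem_ball, dist_zero_right, norm_smul, norm_inv, Real.norm_eq_abs,
      abs_of_pos hε0] at h2
    have := (inv_mul_lt_iff₀ hε0).1 h2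
    linarith
  have hKcs : HasCompactSupport (kernel ρ ε) :=
    HasCompactSupport.intro (isCompact_closedBall 0 ε) fun y hy => by
      by_contra h
      exact hy (Metric.mem_closedBall.2 (by simpa [dist_zero_right] using hK_supp y h))
  have hu_meas : AEStronglyMeasurable u volume := hu_loc.aestronglyMeasurable
  have hg := gsq_loc u hu_per hu_loc hu_L2
  have q_loc : ∀ i j : Fin 3, LocallyIntegrable (fun t => u t i * u t j) volume := by
    intro i j
    rw [locallyIntegrable_iff]
    intro K hK
    refine (hg.integrableOn_isCompact hK).mono' ?_ (Filter.Eventually.of_forall fun t => ?_)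
    · exact (((EuclideanSpace.proj i : E3 →L[ℝ] ℝ).continuous.comp_aestronglyMeasurable
        hu_meas.restrict).mul
        ((EuclideanSpace.proj j : E3 →L[ℝ] ℝ).continuous.comp_aestronglyMeasurable
        hu_meas.restrict))
    · rw [Real.norm_eq_abs, abs_mul, pow_two]
      exact mul_le_mul (coord_le_norm _ _) (coord_le_norm _ _) (abs_nonneg _) (norm_nonneg _)
  refine Filter.Eventually.of_forall fun x => ?_
  have hKx_cont : Continuous fun t : E3 => kernel ρ ε (x - t) :=
    hK_cont.comp (continuous_const.sub continuous_id)
  have hKx_cs : HasCompactSupport fun t : E3 => kernel ρ ε (x - t) :=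
    HasCompactSupport.intro (isCompact_closedBall x ε) fun t ht => by
      by_contra h
      refine ht (Metric.mem_closedBall.2 ?_)
      have := hK_supp _ h
      rwa [← dist_eq_norm, dist_comm] at this
  have hF : Integrable (fun t => kernel ρ ε (x - t) • u t) volume :=
    hu_loc.integrable_smul_left_of_hasCompactSupport hKx_cont hKx_cs
  have hI1 : Integrable (fun y => kernel ρ ε y • u (x - y)) volume := by
    have := (integrable_comp_sub_left (fun t => kernel ρ ε (x - t) • u t) x).2 hF
    simpa [sub_sub_cancel] using this
  intro i j
  have hI3 : Integrable (fun y => kernel ρ ε y * (u (x - y) i * u (x - y) j)) volume := by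
    have hG : Integrable (fun t => kernel ρ ε (x - t) • (u t i * u t j)) volume :=
      (q_loc i j).integrable_smul_left_of_hasCompactSupport hKx_cont hKx_cs
    have := (integrable_comp_sub_left
      (fun t => kernel ρ ε (x - t) • (u t i * u t j)) x).2 hG
    simpa [sub_sub_cancel, smul_eq_mul] using this
  have hI2 : ∀ k : Fin 3, Integrable (fun y => kernel ρ ε y * u (x - y) k) volume := by
    intro k
    have := (EuclideanSpace.proj k : E3 →L[ℝ] ℝ).integrable_comp hI1
    simpa [smul_eq_mul] using this
  have hKint : Integrable (kernel ρ ε) volume :=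
    hK_cont.integrable_of_hasCompactSupport hKcs
  have hK1 : ∫ y : E3, kernel ρ ε y = 1 := by
    have h1 : ∫ y : E3, kernel ρ ε y = (ε^3)⁻¹ * ∫ y : E3, ρ (ε⁻¹ • y) :=
      integral_const_mul _ _
    rw [h1, MeasureTheory.Measure.integral_comp_inv_smul_of_nonneg volume ρ hε0.le, hρ_int]
    simp [finrank_euclideanSpace_fin]
    field_simp
  have hmol : ∀ k : Fin 3,
      mollifyVec ρ ε u x k = ∫ y : E3, kernel ρ ε y * u (x - y) k := by
    intro k
    have := ((EuclideanSpace.proj k : E3 →L[ℝ] ℝ).integral_comp_comm hI1).symm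
    simpa [mollifyVec, smul_eq_mul] using this
  rw [hmol i, hmol j]
  have heq : (fun y => kernel ρ ε y * ((u (x - y) i - u x i) * (u (x - y) j - u x j)))
      = fun y => (kernel ρ ε y * (u (x - y) i * u (x - y) j)
          - u x j * (kernel ρ ε y * u (x - y) i))
        - (u x i * (kernel ρ ε y * u (x - y) j)
          - (u x i * u x j) * kernel ρ ε y) := by
    funext y; ring
  have h1 : Integrable (fun y => u x j * (kernel ρ ε y * u (x - y) i)) volume :=
    (hI2 i).const_mul _
  have h2 : Integrable (fun y => u x i * (kernel ρ ε y * u (x - y) j)) volume :=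
    (hI2 j).const_mul _
  have h3 : Integrable (fun y => u x i * u x j * kernel ρ ε y) volume :=
    hKint.const_mul _
  have hA : Integrable (fun y => kernel ρ ε y * (u (x - y) i * u (x - y) j)
      - u x j * (kernel ρ ε y * u (x - y) i)) volume := hI3.sub h1
  have hB : Integrable (fun y => u x i * (kernel ρ ε y * u (x - y) j)
      - u x i * u x j * kernel ρ ε y) volume := h2.sub h3
  rw [heq, integral_sub hA hB, integral_sub hI3 h1, integral_sub h2 h3,
    integral_const_mul, integral_const_mul, integral_const_mul, hK1]
  ring
end
end

section
/- Let ω : ℝ₊ → ℝ₊ be non-decreasing with ω(s) → 0 as s → 0⁺, let M ≥ 0, and let u ∈ H¹(ℝ³₊; ℝ³) satisfy, for almost every z₃ > 0, |u(x_h, z₃) − u(y_h, z₃)| ≤ M ω(|x_h − y_h|) for all x_h, y_h ∈ ℝ². Let ũ_ε denote the horizontal mollification of u with a 2-dimensional mollifier ρ̃ (ρ̃ ≥ 0, supp ρ̃ ⊂ B(0,1), ∫ρ̃ = 1, ρ̃_ε(x_h) = ε⁻²ρ̃(x_h/ε)). Then |∫_{ℝ³₊} (u − ũ_ε) ⊗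 (u − ũ_ε) : ∇ũ_ε dx| ≤ 2 M ω(ε) ‖u‖_{L²(ℝ³₊)} ‖∇u‖_{L²(ℝ³₊)}. -/
open MeasureTheory Real

noncomputable section

/-- Points of `ℝ³` split as `(x_h, x₃)` with `x_h ∈ ℝ²` the horizontal
variables. -/
abbrev HalfSpacePoint := (EuclideanSpace ℝ (Fin 2)) × ℝ

/-- The open half-space `ℝ³₊ = {x₃ > 0}`. -/
def halfSpace : Set HalfSpacePoint := {p | 0 < p.2}

/-- The three coordinate directions of `ℝ³ = ℝ² × ℝ`. -/
def dir : Fin 3 → HalfSpacePoint :=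
  ![(EuclideanSpace.single 0 1, (0:ℝ)), (EuclideanSpace.single 1 1, (0:ℝ)),
    (0, (1:ℝ))]

/-- The rescaled two-dimensional kernel `ρ̃_ε(x_h) = ε⁻² ρ̃(x_h/ε)`. -/
def kernel2 (ρ : EuclideanSpace ℝ (Fin 2) → ℝ) (ε : ℝ)
    (y : EuclideanSpace ℝ (Fin 2)) : ℝ :=
  (ε ^ 2)⁻¹ * ρ (ε⁻¹ • y)

/-- The horizontal mollification
`ũ_ε(x_h, x₃) = ∫_{ℝ²} ρ̃_ε(y_h) u(x_h − y_h, x₃) dy_h`. -/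
def hMollify (ρ : EuclideanSpace ℝ (Fin 2) → ℝ) (ε : ℝ)
    (u : HalfSpacePoint → EuclideanSpace ℝ (Fin 3))
    (p : HalfSpacePoint) : EuclideanSpace ℝ (Fin 3) :=
  ∫ y : EuclideanSpace ℝ (Fin 2), kernel2 ρ ε y • u (p.1 - y, p.2)

/-- The horizontal mollification of the (weak) gradient; this is the gradient
`∇ũ_ε` of the horizontal mollification. -/
def hMollifyGrad (ρ : EuclideanSpace ℝ (Fin 2) → ℝ) (ε : ℝ)
    (g : HalfSpacePoint → (HalfSpacePoint →L[ℝ] EuclideanSpace ℝ (Fin 3)))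
    (p : HalfSpacePoint) : HalfSpacePoint →L[ℝ] EuclideanSpace ℝ (Fin 3) :=
  ∫ y : EuclideanSpace ℝ (Fin 2), kernel2 ρ ε y • g (p.1 - y, p.2)

/-! ### Auxiliary lemmas -/

lemma ofReal_norm_eq_coe_nnnorm {E : Type*} [NormedAddCommGroup E] (a : E) :
    ENNReal.ofReal ‖a‖ = (‖a‖₊ : ENNReal) := ofReal_norm a

lemma Real.ennnorm_eq_ofReal {r : ℝ} (hr : 0 ≤ r) :
    (‖r‖₊ : ENNReal) = ENNReal.ofReal r := Real.enorm_eq_ofReal hr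

instance : (volume : Measure HalfSpacePoint).IsAddRightInvariant := by
  rw [Measure.volume_eq_prod]; infer_instance

lemma halfSpace_meas : MeasurableSet halfSpace :=
  measurableSet_lt measurable_const measurable_snd

lemma sub_hor (p : HalfSpacePoint) (y : EuclideanSpace ℝ (Fin 2)) :
    p - (y, (0:ℝ)) = (p.1 - y, p.2) := by
  ext <;> simp [Prod.sub_def]

lemma dir_norm_le (i : Fin 3) : ‖dir i‖ ≤ 1 := by
  fin_cases i <;>
    simp [dir, Prod.norm_def, EuclideanSpace.norm_single]

/-- Translation invariance of the restricted measure, lintegral version. -/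
lemma lintegral_translate (y : EuclideanSpace ℝ (Fin 2))
    (f : HalfSpacePoint → ENNReal) (hf : Measurable f) :
    ∫⁻ p in halfSpace, f (p.1 - y, p.2) = ∫⁻ p in halfSpace, f p := by
  have h1 : MeasurePreserving (fun p : HalfSpacePoint => p - (y, (0:ℝ))) volume volume :=
    measurePreserving_sub_right volume _
  have h2 : (fun p : HalfSpacePoint => p - (y, (0:ℝ))) ⁻¹' halfSpace = halfSpace := by
    ext p; simp [halfSpace, Prod.sub_def]
  have h3 := h1.restrict_preimage (s := halfSpace) halfSpace_meas
  rw [h2] at h3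
  calc ∫⁻ p in halfSpace, f (p.1 - y, p.2)
      = ∫⁻ p in halfSpace, f (p - (y, (0:ℝ))) := by
        apply lintegral_congr; intro p; rw [sub_hor]
    _ = ∫⁻ p in halfSpace, f p := h3.lintegral_comp hf

/-- If `N` is a null set, then for a.e. `p` a.e. horizontal translate avoids `N`. -/
lemma slice_null {N : Set HalfSpacePoint} (hN : MeasurableSet N) (h0 : volume N = 0) :
    ∀ᵐ p : HalfSpacePoint, ∀ᵐ y : EuclideanSpace ℝ (Fin 2), (p.1 - y, p.2) ∉ N := by
  have hT : Measurable (fun q : HalfSpacePoint × EuclideanSpace ℝ (Fin 2) =>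
      q.1 - (q.2, (0:ℝ))) :=
    measurable_fst.sub ((measurable_snd.prodMk measurable_const))
  set A := (fun q : HalfSpacePoint × EuclideanSpace ℝ (Fin 2) => q.1 - (q.2, (0:ℝ))) ⁻¹' N
    with hAdef
  have hA : MeasurableSet A := hT hN
  have hA0 : (volume : Measure (HalfSpacePoint × EuclideanSpace ℝ (Fin 2))) A = 0 := by
    rw [Measure.volume_eq_prod, Measure.prod_apply_symm hA]
    have hs : ∀ y : EuclideanSpace ℝ (Fin 2),
        volume ((fun p : HalfSpacePoint => (p, y)) ⁻¹' A) = 0 := by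
      intro y
      have he : ((fun p : HalfSpacePoint => (p, y)) ⁻¹' A)
          = (fun p : HalfSpacePoint => p - (y, (0:ℝ))) ⁻¹' N := rfl
      rw [he, (measurePreserving_sub_right volume _).measure_preimage
        hN.nullMeasurableSet, h0]
    simp [hs]
  have h1 : ∀ᵐ q : HalfSpacePoint × EuclideanSpace ℝ (Fin 2), q ∉ A := by
    rw [ae_iff]; simpa using hA0
  rw [Measure.volume_eq_prod] at h1
  have h2 := Measure.ae_ae_of_ae_prod h1
  filter_upwards [h2] with p hp
  filter_upwards [hp] with y hy
  intro hmem
  exact hy (by simpa [hAdef, sub_hor] using hmem)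

/-- Transfer a.e.-equality on the half-space to a.e. slice equality. -/
lemma slice_congr {E : Type*} (w w' : HalfSpacePoint → E)
    (h : ∀ᵐ p ∂(volume.restrict halfSpace), w p = w' p) :
    ∀ᵐ p ∂(volume.restrict halfSpace),
      ∀ᵐ y : EuclideanSpace ℝ (Fin 2), w (p.1 - y, p.2) = w' (p.1 - y, p.2) := by
  have h0 : (volume.restrict halfSpace) {p | ¬ w p = w' p} = 0 := h
  obtain ⟨N, hsub, hNmeas, hN0⟩ := exists_measurable_superset_of_null h0
  rw [Measure.restrict_apply hNmeas] at hN0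
  have key := slice_null (hNmeas.inter halfSpace_meas) hN0
  have key' : ∀ᵐ p ∂(volume.restrict halfSpace),
      ∀ᵐ y : EuclideanSpace ℝ (Fin 2), (p.1 - y, p.2) ∉ N ∩ halfSpace :=
    key.filter_mono (ae_mono Measure.restrict_le_self)
  filter_upwards [key', ae_restrict_mem halfSpace_meas] with p hp hpmem
  filter_upwards [hp] with y hy
  by_contra hne
  exact hy ⟨hsub hne, hpmem⟩

section Kernel
variable {ρ : EuclideanSpace ℝ (Fin 2) → ℝ} {ε : ℝ}

lemma kernel2_nonneg (hρ : ∀ x, 0 ≤ ρ x) (hε : 0 < ε) (y : EuclideanSpace ℝ (Fin 2)) :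
    0 ≤ kernel2 ρ ε y := by
  unfold kernel2
  exact mul_nonneg (by positivity) (hρ _)

lemma kernel2_integral (hε : 0 < ε)
    (hρ_int : ∫ x : EuclideanSpace ℝ (Fin 2), ρ x = 1) :
    ∫ y, kernel2 ρ ε y = 1 := by
  unfold kernel2
  rw [integral_const_mul, Measure.integral_comp_inv_smul_of_nonneg volume ρ hε.le]
  have h2 : Module.finrank ℝ (EuclideanSpace ℝ (Fin 2)) = 2 := by simp
  rw [h2, hρ_int]
  simp only [smul_eq_mul, mul_one]
  field_simp

lemma kernel2_support (hε : 0 < ε) {y : EuclideanSpace ℝ (Fin 2)}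
    (hρ_supp : Function.support ρ ⊆ Metric.ball 0 1)
    (hy : kernel2 ρ ε y ≠ 0) : ‖y‖ < ε := by
  have h : ρ (ε⁻¹ • y) ≠ 0 := by
    intro h0; apply hy; unfold kernel2; rw [h0, mul_zero]
  have hb := hρ_supp h
  simp only [Metric.mem_ball, dist_zero_right] at hb
  rw [norm_smul, norm_inv, Real.norm_eq_abs, abs_of_pos hε] at hb
  have h2 := (inv_mul_lt_iff₀ hε).mp hb
  linarith

lemma kernel2_integrable (hρ : Continuous ρ)
    (hρ_supp : Function.support ρ ⊆ Metric.ball 0 1) (hε : 0 < ε) :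
    Integrable (kernel2 ρ ε) := by
  have hc : Continuous (kernel2 ρ ε) := by
    unfold kernel2; exact continuous_const.mul (hρ.comp (continuous_const_smul _))
  apply hc.integrable_of_hasCompactSupport
  apply HasCompactSupport.intro (isCompact_closedBall (0:EuclideanSpace ℝ (Fin 2)) ε)
  intro y hy
  by_contra h
  exact hy (by simpa [Metric.mem_closedBall, dist_zero_right] using
    (kernel2_support hε hρ_supp h).le)

lemma kernel2_lintegral (hρ : Continuous ρ) (hρ_nonneg : ∀ x, 0 ≤ ρ x)
    (hρ_supp : Function.support ρ ⊆ Metric.ball 0 1) (hε : 0 < ε)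
    (hρ_int : ∫ x : EuclideanSpace ℝ (Fin 2), ρ x = 1) :
    ∫⁻ y, ENNReal.ofReal (kernel2 ρ ε y) = 1 := by
  rw [← ofReal_integral_eq_lintegral_ofReal (kernel2_integrable hρ hρ_supp hε)
    (Filter.Eventually.of_forall (kernel2_nonneg hρ_nonneg hε)),
    kernel2_integral hε hρ_int, ENNReal.ofReal_one]

lemma kernel2_measurable (hρ : Continuous ρ) :
    Measurable (kernel2 ρ ε) := by
  unfold kernel2; exact (continuous_const.mul (hρ.comp (continuous_const_smul _))).measurable

end Kernel

section JF
open ENNReal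

variable {ρ : EuclideanSpace ℝ (Fin 2) → ℝ} {ε : ℝ}

lemma jensen_step (hρ : Continuous ρ) (hρ_nonneg : ∀ x, 0 ≤ ρ x)
    (hρ_supp : Function.support ρ ⊆ Metric.ball 0 1) (hε : 0 < ε)
    (hρ_int : ∫ x : EuclideanSpace ℝ (Fin 2), ρ x = 1)
    (h : EuclideanSpace ℝ (Fin 2) → ℝ≥0∞) (hh : Measurable h) :
    (∫⁻ y, ENNReal.ofReal (kernel2 ρ ε y) * h y) ^ (2:ℝ)
      ≤ ∫⁻ y, ENNReal.ofReal (kernel2 ρ ε y) * (h y) ^ (2:ℝ) := by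
  set K : EuclideanSpace ℝ (Fin 2) → ℝ≥0∞ := fun y => ENNReal.ofReal (kernel2 ρ ε y) with hK
  have hKm : Measurable K := (kernel2_measurable hρ).ennreal_ofReal
  have hK1 : ∫⁻ y, K y = 1 := kernel2_lintegral hρ hρ_nonneg hρ_supp hε hρ_int
  have hconj : Real.HolderConjugate 2 2 := .two_two
  have hH := ENNReal.lintegral_mul_le_Lp_mul_Lq volume hconj
    (f := fun y => (K y) ^ (1/2:ℝ)) (g := fun y => (K y) ^ (1/2:ℝ) * h y)
    (hKm.pow_const _).aemeasurable ((hKm.pow_const _).mul hh).aemeasurable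
  have e1 : ∀ y, ((K y) ^ (1/2:ℝ)) * ((K y) ^ (1/2:ℝ) * h y) = K y * h y := by
    intro y
    rw [← mul_assoc, ← ENNReal.rpow_add_of_nonneg _ _ (by norm_num) (by norm_num)]
    norm_num
  have e2 : ∀ y, ((K y) ^ (1/2:ℝ)) ^ (2:ℝ) = K y := by
    intro y; rw [← ENNReal.rpow_mul]; norm_num
  have e3 : ∀ y, ((K y) ^ (1/2:ℝ) * h y) ^ (2:ℝ) = K y * (h y) ^ (2:ℝ) := by
    intro y; rw [ENNReal.mul_rpow_of_nonneg _ _ (by norm_num), e2]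
  simp only [Pi.mul_apply, e1, e2, e3] at hH
  rw [hK1] at hH
  simp only [ENNReal.one_rpow, one_mul] at hH
  calc (∫⁻ y, K y * h y) ^ (2:ℝ)
      ≤ ((∫⁻ y, K y * (h y) ^ (2:ℝ)) ^ (1/2:ℝ)) ^ (2:ℝ) :=
        ENNReal.rpow_le_rpow hH (by norm_num)
    _ = ∫⁻ y, K y * (h y) ^ (2:ℝ) := by rw [← ENNReal.rpow_mul]; norm_num

lemma JF {E : Type*} [NormedAddCommGroup E]
    (hρ : Continuous ρ) (hρ_nonneg : ∀ x, 0 ≤ ρ x)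
    (hρ_supp : Function.support ρ ⊆ Metric.ball 0 1) (hε : 0 < ε)
    (hρ_int : ∫ x : EuclideanSpace ℝ (Fin 2), ρ x = 1)
    (w : HalfSpacePoint → E) (hw : StronglyMeasurable w) :
    ∫⁻ p in halfSpace,
        (∫⁻ y, ENNReal.ofReal (kernel2 ρ ε y) * (‖w (p.1 - y, p.2)‖₊ : ℝ≥0∞)) ^ (2:ℝ)
      ≤ ∫⁻ p in halfSpace, (‖w p‖₊ : ℝ≥0∞) ^ (2:ℝ) := by
  set K : EuclideanSpace ℝ (Fin 2) → ℝ≥0∞ := fun y => ENNReal.ofReal (kernel2 ρ ε y) with hKdef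
  have hKm : Measurable K := (kernel2_measurable hρ).ennreal_ofReal
  have hK1 : ∫⁻ y, K y = 1 := kernel2_lintegral hρ hρ_nonneg hρ_supp hε hρ_int
  have hmap : Measurable (fun q : HalfSpacePoint × EuclideanSpace ℝ (Fin 2) =>
      ((q.1.1 - q.2, q.1.2) : HalfSpacePoint)) :=
    ((measurable_fst.fst.sub measurable_snd).prodMk measurable_fst.snd)
  have hwm : Measurable (fun q : HalfSpacePoint × EuclideanSpace ℝ (Fin 2) =>
      (‖w (q.1.1 - q.2, q.1.2)‖₊ : ℝ≥0∞)) :=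
    (hw.comp_measurable hmap).enorm
  have hsl : ∀ p : HalfSpacePoint, Measurable (fun y => (‖w (p.1 - y, p.2)‖₊ : ℝ≥0∞)) := by
    intro p
    exact (hw.comp_measurable ((measurable_const.sub measurable_id).prodMk
      measurable_const)).enorm
  calc ∫⁻ p in halfSpace, (∫⁻ y, K y * (‖w (p.1 - y, p.2)‖₊ : ℝ≥0∞)) ^ (2:ℝ)
      ≤ ∫⁻ p in halfSpace, ∫⁻ y, K y * ((‖w (p.1 - y, p.2)‖₊ : ℝ≥0∞)) ^ (2:ℝ) := by
        apply lintegral_mono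
        intro p
        exact jensen_step hρ hρ_nonneg hρ_supp hε hρ_int _ (hsl p)
    _ = ∫⁻ y, ∫⁻ p in halfSpace, K y * ((‖w (p.1 - y, p.2)‖₊ : ℝ≥0∞)) ^ (2:ℝ) := by
        apply lintegral_lintegral_swap
        exact ((hKm.comp measurable_snd).mul (hwm.pow_const _)).aemeasurable
    _ = ∫⁻ y, K y * ∫⁻ p in halfSpace, ((‖w (p.1 - y, p.2)‖₊ : ℝ≥0∞)) ^ (2:ℝ) := by
        apply lintegral_congr; intro y
        exact lintegral_const_mul' _ _ ENNReal.ofReal_ne_top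
    _ = ∫⁻ y, K y * ∫⁻ p in halfSpace, ((‖w p‖₊ : ℝ≥0∞)) ^ (2:ℝ) := by
        apply lintegral_congr; intro y
        rw [lintegral_translate y (fun p => (‖w p‖₊ : ℝ≥0∞) ^ (2:ℝ)) (hw.enorm.pow_const _)]
    _ = ∫⁻ p in halfSpace, (‖w p‖₊ : ℝ≥0∞) ^ (2:ℝ) := by
        rw [lintegral_mul_const _ hKm, hK1, one_mul]
end JF

section MB
open ENNReal

variable {ρ : EuclideanSpace ℝ (Fin 2) → ℝ} {ε : ℝ}

lemma smul_ennnorm_eq (hρ_nonneg : ∀ x, 0 ≤ ρ x) (hε : 0 < ε)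
    {E : Type*} [NormedAddCommGroup E] [NormedSpace ℝ E]
    (y : EuclideanSpace ℝ (Fin 2)) (v : E) :
    (‖kernel2 ρ ε y • v‖₊ : ℝ≥0∞) = ENNReal.ofReal (kernel2 ρ ε y) * (‖v‖₊ : ℝ≥0∞) := by
  rw [nnnorm_smul, ENNReal.coe_mul, Real.ennnorm_eq_ofReal (kernel2_nonneg hρ_nonneg hε y)]

lemma MB {E : Type*} [NormedAddCommGroup E] [NormedSpace ℝ E]
    (hρ_nonneg : ∀ x, 0 ≤ ρ x) (hε : 0 < ε)
    (w : HalfSpacePoint → E) (p : HalfSpacePoint) :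
    (‖∫ y, kernel2 ρ ε y • w (p.1 - y, p.2)‖₊ : ℝ≥0∞)
      ≤ ∫⁻ y, ENNReal.ofReal (kernel2 ρ ε y) * (‖w (p.1 - y, p.2)‖₊ : ℝ≥0∞) := by
  calc (‖∫ y, kernel2 ρ ε y • w (p.1 - y, p.2)‖₊ : ℝ≥0∞)
      ≤ ∫⁻ y, (‖kernel2 ρ ε y • w (p.1 - y, p.2)‖₊ : ℝ≥0∞) :=
        enorm_integral_le_lintegral_enorm _
    _ = ∫⁻ y, ENNReal.ofReal (kernel2 ρ ε y) * (‖w (p.1 - y, p.2)‖₊ : ℝ≥0∞) := by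
        apply lintegral_congr; intro y; exact smul_ennnorm_eq hρ_nonneg hε y _

lemma MBgrad (hρ_nonneg : ∀ x, 0 ≤ ρ x) (hε : 0 < ε)
    (g : HalfSpacePoint → (HalfSpacePoint →L[ℝ] EuclideanSpace ℝ (Fin 3)))
    (p : HalfSpacePoint) (d : HalfSpacePoint) :
    (‖(∫ y, kernel2 ρ ε y • g (p.1 - y, p.2)) d‖₊ : ℝ≥0∞)
      ≤ ∫⁻ y, ENNReal.ofReal (kernel2 ρ ε y) * (‖g (p.1 - y, p.2) d‖₊ : ℝ≥0∞) := by
  by_cases hint : Integrable (fun y => kernel2 ρ ε y • g (p.1 - y, p.2)) volume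
  · rw [ContinuousLinearMap.integral_apply hint]
    calc (‖∫ y, (kernel2 ρ ε y • g (p.1 - y, p.2)) d‖₊ : ℝ≥0∞)
        ≤ ∫⁻ y, (‖(kernel2 ρ ε y • g (p.1 - y, p.2)) d‖₊ : ℝ≥0∞) :=
          enorm_integral_le_lintegral_enorm _
      _ = ∫⁻ y, ENNReal.ofReal (kernel2 ρ ε y) * (‖g (p.1 - y, p.2) d‖₊ : ℝ≥0∞) := by
          apply lintegral_congr; intro y
          rw [ContinuousLinearMap.smul_apply]
          exact smul_ennnorm_eq hρ_nonneg hε y _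
  · rw [integral_undef hint]
    simp
end MB

section SMc
open ENNReal
variable {ρ : EuclideanSpace ℝ (Fin 2) → ℝ} {ε : ℝ}

lemma SM_hMollify {E : Type*} [NormedAddCommGroup E] [NormedSpace ℝ E]
    (hρ : Continuous ρ) (w : HalfSpacePoint → E) (hw : StronglyMeasurable w) :
    StronglyMeasurable (fun p : HalfSpacePoint =>
      ∫ y, kernel2 ρ ε y • w (p.1 - y, p.2)) := by
  have hmap : Measurable (fun q : HalfSpacePoint × EuclideanSpace ℝ (Fin 2) =>
      ((q.1.1 - q.2, q.1.2) : HalfSpacePoint)) :=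
    ((measurable_fst.fst.sub measurable_snd).prodMk measurable_fst.snd)
  exact StronglyMeasurable.integral_prod_right'
    (f := fun q : HalfSpacePoint × EuclideanSpace ℝ (Fin 2) =>
      kernel2 ρ ε q.2 • w (q.1.1 - q.2, q.1.2))
    ((((kernel2_measurable hρ).comp measurable_snd).stronglyMeasurable).smul
      (hw.comp_measurable hmap))

lemma lintegral_sq_ne_top {α : Type*} {m : MeasurableSpace α} {μ : Measure α}
    {E : Type*} [NormedAddCommGroup E] {f : α → E} (h : MemLp f 2 μ) :
    ∫⁻ a, (‖f a‖₊ : ℝ≥0∞) ^ (2:ℝ) ∂μ ≠ ∞ := by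
  have h2 := h.2
  rw [eLpNorm_eq_lintegral_rpow_enorm_toReal (by norm_num) (by norm_num)] at h2
  intro htop
  rw [ENNReal.toReal_ofNat, show (∫⁻ (x : α), ‖f x‖ₑ ^ (2:ℝ) ∂μ) = ∞ from htop] at h2
  simp [ENNReal.top_rpow_of_pos (by norm_num : (0:ℝ) < 1/2)] at h2

lemma integral_norm_sq_eq {α : Type*} {m : MeasurableSpace α} {μ : Measure α}
    {E : Type*} [NormedAddCommGroup E] {f : α → E} (hf : AEStronglyMeasurable f μ) :
    ∫ a, ‖f a‖ ^ 2 ∂μ = (∫⁻ a, (‖f a‖₊ : ℝ≥0∞) ^ (2:ℝ) ∂μ).toReal := by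
  have hsm : AEStronglyMeasurable (fun a => ‖f a‖ ^ 2) μ := by
    have he : (fun a => ‖f a‖ ^ 2) = fun a => ‖f a‖ * ‖f a‖ := by funext a; ring
    rw [he]; exact hf.norm.mul hf.norm
  rw [integral_eq_lintegral_of_nonneg_ae (Filter.Eventually.of_forall fun a => by positivity) hsm]
  congr 1
  apply lintegral_congr; intro a
  rw [ENNReal.ofReal_pow (norm_nonneg _), ofReal_norm_eq_coe_nnnorm,
    show (2:ℝ) = ((2:ℕ):ℝ) by norm_num, ENNReal.rpow_natCast]
end SMc

lemma modulus_ae (P : ℝ → Prop)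
    (h : ∀ᵐ z ∂(volume.restrict (Set.Ioi (0:ℝ))), P z) :
    ∀ᵐ p : HalfSpacePoint ∂(volume.restrict halfSpace), P p.2 := by
  have h0 : (volume.restrict (Set.Ioi (0:ℝ))) {z | ¬ P z} = 0 := h
  obtain ⟨B, hsub, hBm, hB0⟩ := exists_measurable_superset_of_null h0
  rw [Measure.restrict_apply hBm] at hB0
  set B' := B ∩ Set.Ioi (0:ℝ) with hB'def
  have hpre : volume (Prod.snd ⁻¹' B' : Set HalfSpacePoint) = 0 := by
    rw [Measure.volume_eq_prod]
    have hset : (Prod.snd ⁻¹' B' : Set HalfSpacePoint) = Set.univ ×ˢ B' := by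
      ext q; simp
    rw [hset, Measure.prod_prod, hB0, mul_zero]
  have h1 : ∀ᵐ p : HalfSpacePoint, p.2 ∉ B' := by
    rw [ae_iff]; simp only [not_not]; exact hpre
  have h2 : ∀ᵐ p : HalfSpacePoint ∂(volume.restrict halfSpace), p.2 ∉ B' :=
    h1.filter_mono (ae_mono Measure.restrict_le_self)
  filter_upwards [h2, ae_restrict_mem halfSpace_meas] with p hp hmem
  by_contra hne
  exact hp ⟨hsub hne, hmem⟩

lemma pw_bound (a : EuclideanSpace ℝ (Fin 3)) (c : Fin 3 → EuclideanSpace ℝ (Fin 3)) :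
    |∑ i : Fin 3, ∑ j : Fin 3, a i * a j * c i j| ≤
      ‖a‖ * ‖a‖ * √(∑ i : Fin 3, ‖c i‖ ^ 2) := by
  have hnorm : ∀ x : EuclideanSpace ℝ (Fin 3), ‖x‖ = √(∑ i : Fin 3, x i ^ 2) := by
    intro x
    rw [EuclideanSpace.norm_eq]
    congr 1; apply Finset.sum_congr rfl; intro i _
    rw [Real.norm_eq_abs, sq_abs]
  have hinner : ∀ i, |∑ j : Fin 3, a j * c i j| ≤ ‖a‖ * ‖c i‖ := by
    intro i
    have hcs := Finset.sum_mul_sq_le_sq_mul_sq Finset.univ (fun j => a j) (fun j => c i j)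
    have h2 : |∑ j : Fin 3, a j * c i j|
        ≤ √((∑ j : Fin 3, a j ^ 2) * (∑ j : Fin 3, c i j ^ 2)) := by
      rw [← Real.sqrt_sq_eq_abs]
      exact Real.sqrt_le_sqrt hcs
    calc |∑ j : Fin 3, a j * c i j|
        ≤ √((∑ j : Fin 3, a j ^ 2) * (∑ j : Fin 3, c i j ^ 2)) := h2
      _ = √(∑ j : Fin 3, a j ^ 2) * √(∑ j : Fin 3, c i j ^ 2) := Real.sqrt_mul (by positivity) _
      _ = ‖a‖ * ‖c i‖ := by rw [hnorm a, hnorm (c i)]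
  calc |∑ i : Fin 3, ∑ j : Fin 3, a i * a j * c i j|
      = |∑ i : Fin 3, a i * ∑ j : Fin 3, a j * c i j| := by
        congr 1; apply Finset.sum_congr rfl; intro i _
        rw [Finset.mul_sum]; apply Finset.sum_congr rfl; intro j _; ring
    _ ≤ ∑ i : Fin 3, |a i * ∑ j : Fin 3, a j * c i j| := Finset.abs_sum_le_sum_abs _ _
    _ = ∑ i : Fin 3, |a i| * |∑ j : Fin 3, a j * c i j| := by
        apply Finset.sum_congr rfl; intro i _; rw [abs_mul]
    _ ≤ ∑ i : Fin 3, |a i| * (‖a‖ * ‖c i‖) := by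
        apply Finset.sum_le_sum; intro i _
        exact mul_le_mul_of_nonneg_left (hinner i) (abs_nonneg _)
    _ ≤ √(∑ i : Fin 3, |a i| ^ 2) * √(∑ i : Fin 3, (‖a‖ * ‖c i‖) ^ 2) := by
        rw [← Real.sqrt_mul (by positivity)]
        rw [← Real.sqrt_sq (by positivity : (0:ℝ) ≤ ∑ i : Fin 3, |a i| * (‖a‖ * ‖c i‖))]
        exact Real.sqrt_le_sqrt (Finset.sum_mul_sq_le_sq_mul_sq Finset.univ _ _)
    _ = ‖a‖ * ‖a‖ * √(∑ i : Fin 3, ‖c i‖ ^ 2) := by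
        have h1 : √(∑ i : Fin 3, |a i| ^ 2) = ‖a‖ := by
          rw [hnorm a]; congr 1; apply Finset.sum_congr rfl; intro i _; rw [sq_abs]
        have h2 : √(∑ i : Fin 3, (‖a‖ * ‖c i‖) ^ 2) = ‖a‖ * √(∑ i : Fin 3, ‖c i‖ ^ 2) := by
          rw [show (∑ i : Fin 3, (‖a‖ * ‖c i‖) ^ 2) = ‖a‖^2 * ∑ i : Fin 3, ‖c i‖ ^ 2 by
                rw [Finset.mul_sum]; apply Finset.sum_congr rfl; intro i _; ring,
             Real.sqrt_mul (by positivity), Real.sqrt_sq (norm_nonneg _)]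
        rw [h1, h2]; ring

set_option maxHeartbeats 1000000 in
open ENNReal in
/-- for `u ∈ H¹(ℝ³₊;ℝ³)` (with weak gradient `g`) whose
horizontal increments are controlled by `M ω(|x_h − y_h|)` for a.e. `z₃ > 0`,
`|∫_{ℝ³₊} (u − ũ_ε) ⊗ (u − ũ_ε) : ∇ũ_ε dx| ≤ 2 M ω(ε) ‖u‖_{L²} ‖∇u‖_{L²}`. -/
theorem abs_integral_diff_tensor_grad_hMollify_le
    (ρ : EuclideanSpace ℝ (Fin 2) → ℝ)
    (hρ_smooth : ContDiff ℝ (⊤ : ℕ∞) ρ)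
    (hρ_nonneg : ∀ x, 0 ≤ ρ x)
    (hρ_supp : Function.support ρ ⊆ Metric.ball 0 1)
    (hρ_int : ∫ x : EuclideanSpace ℝ (Fin 2), ρ x = 1)
    (ε : ℝ) (hε : ε ∈ Set.Ioc (0:ℝ) 1)
    (ω : ℝ → ℝ)
    (hω_nonneg : ∀ s, 0 ≤ ω s)
    (hω_mono : MonotoneOn ω (Set.Ici 0))
    (hω_lim : Filter.Tendsto ω (nhdsWithin 0 (Set.Ioi 0)) (nhds 0))
    (M : ℝ) (hM : 0 ≤ M)
    (u : HalfSpacePoint → EuclideanSpace ℝ (Fin 3))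
    (g : HalfSpacePoint → (HalfSpacePoint →L[ℝ] EuclideanSpace ℝ (Fin 3)))
    -- `u ∈ H¹(ℝ³₊)`: `u` and its weak gradient `g` are square integrable
    (hu_L2 : MemLp u 2 (volume.restrict halfSpace))
    (hg_L2 : MemLp g 2 (volume.restrict halfSpace))
    -- `g` is the distributional gradient of `u` on the half-space
    (hg_weak : ∀ φ : HalfSpacePoint → ℝ,
      ContDiff ℝ (⊤ : ℕ∞) φ → HasCompactSupport φ → tsupport φ ⊆ halfSpace →
      ∀ d : HalfSpacePoint,
        ∫ p in halfSpace, fderiv ℝ φ p d • u p =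
          - ∫ p in halfSpace, φ p • g p d)
    -- horizontal continuity with modulus `M ω`
    (hu_hor : ∀ᵐ z ∂(volume.restrict (Set.Ioi (0:ℝ))),
      ∀ xh yh : EuclideanSpace ℝ (Fin 2),
        ‖u (xh, z) - u (yh, z)‖ ≤ M * ω ‖xh - yh‖) :
    |∫ p in halfSpace, ∑ i : Fin 3, ∑ j : Fin 3,
        (u p i - hMollify ρ ε u p i) * (u p j - hMollify ρ ε u p j) *
          hMollifyGrad ρ ε g p (dir i) j| ≤
      2 * M * ω ε * (∫ p in halfSpace, ‖u p‖ ^ 2) ^ ((1:ℝ)/2) *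
        (∫ p in halfSpace, ∑ i : Fin 3, ‖g p (dir i)‖ ^ 2) ^ ((1:ℝ)/2) := by
  obtain ⟨hε0, hε1⟩ := hε
  have hρc : Continuous ρ := hρ_smooth.continuous
  set μ := volume.restrict halfSpace with hμdef
  set S : HalfSpacePoint → ℝ := fun p => ∑ i : Fin 3, ∑ j : Fin 3,
      (u p i - hMollify ρ ε u p i) * (u p j - hMollify ρ ε u p j) *
        hMollifyGrad ρ ε g p (dir i) j with hSdef
  set k := kernel2 ρ ε with hkdef
  set K : EuclideanSpace ℝ (Fin 2) → ℝ≥0∞ := fun y => ENNReal.ofReal (k y) with hKdef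
  -- measurable representatives
  set u' := hu_L2.1.mk u with hu'def
  have hu'sm : StronglyMeasurable u' := hu_L2.1.stronglyMeasurable_mk
  have hue : u =ᵐ[μ] u' := hu_L2.1.ae_eq_mk
  set g' := hg_L2.1.mk g with hg'def
  have hg'sm : StronglyMeasurable g' := hg_L2.1.stronglyMeasurable_mk
  have hge : g =ᵐ[μ] g' := hg_L2.1.ae_eq_mk
  -- a.e. slice equalities
  have hslice_u := slice_congr u u' hue
  have hslice_g := slice_congr g g' hge
  have E1 : ∀ᵐ p ∂μ, hMollify ρ ε u p = hMollify ρ ε u' p := by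
    filter_upwards [hslice_u] with p hp
    unfold hMollify
    apply integral_congr_ae
    filter_upwards [hp] with y hy; rw [hy]
  have E2 : ∀ᵐ p ∂μ, hMollifyGrad ρ ε g p = hMollifyGrad ρ ε g' p := by
    filter_upwards [hslice_g] with p hp
    unfold hMollifyGrad
    apply integral_congr_ae
    filter_upwards [hp] with y hy; rw [hy]
  have E3 : ∀ᵐ p : HalfSpacePoint ∂μ, ∀ xh yh : EuclideanSpace ℝ (Fin 2),
      ‖u (xh, p.2) - u (yh, p.2)‖ ≤ M * ω ‖xh - yh‖ :=
    modulus_ae _ hu_hor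
  -- kernel facts
  have hki : Integrable k := kernel2_integrable hρc hρ_supp hε0
  have hk1 : ∫ y, k y = 1 := kernel2_integral hε0 hρ_int
  have hknn : ∀ y, 0 ≤ k y := kernel2_nonneg hρ_nonneg hε0
  -- the uniform bound on `u - ũ_ε`
  have hC : ∀ᵐ p ∂μ, ‖u p - hMollify ρ ε u p‖ ≤ M * ω ε := by
    filter_upwards [E3, hslice_u] with p hmod hsl
    have hsm' : StronglyMeasurable (fun y => u' (p.1 - y, p.2)) :=
      hu'sm.comp_measurable ((measurable_const.sub measurable_id).prodMk measurable_const)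
    have hsm : AEStronglyMeasurable (fun y => u (p.1 - y, p.2)) volume :=
      hsm'.aestronglyMeasurable.congr (by
        filter_upwards [hsl] with y hy; rw [hy])
    have hdiff : ∀ y, k y ≠ 0 → ‖u p - u (p.1 - y, p.2)‖ ≤ M * ω ε := by
      intro y hk
      have h1 := hmod p.1 (p.1 - y)
      rw [_root_.sub_sub_cancel] at h1
      have h3 : ω ‖y‖ ≤ ω ε :=
        hω_mono (Set.mem_Ici.mpr (norm_nonneg y)) (Set.mem_Ici.mpr hε0.le)
          (kernel2_support hε0 hρ_supp hk).le
      calc ‖u p - u (p.1 - y, p.2)‖ = ‖u (p.1, p.2) - u (p.1 - y, p.2)‖ := by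
            rw [Prod.mk.eta]
        _ ≤ M * ω ‖y‖ := h1
        _ ≤ M * ω ε := mul_le_mul_of_nonneg_left h3 hM
    have hint2 : Integrable (fun y => k y • u (p.1 - y, p.2)) volume := by
      apply Integrable.mono' (hki.mul_const (‖u p‖ + M * ω ε))
        (((kernel2_measurable hρc).stronglyMeasurable.aestronglyMeasurable).smul hsm)
      filter_upwards with y
      change ‖k y • u (p.1 - y, p.2)‖ ≤ _
      rw [norm_smul, Real.norm_eq_abs, abs_of_nonneg (hknn y)]
      by_cases hk : k y = 0
      · simp [hk]
      · have h4 : ‖u (p.1 - y, p.2)‖ ≤ ‖u p‖ + M * ω ε := by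
          have h5 : ‖u (p.1 - y, p.2)‖ ≤ ‖u p‖ + ‖u p - u (p.1 - y, p.2)‖ := by
            calc ‖u (p.1 - y, p.2)‖ = ‖u p - (u p - u (p.1 - y, p.2))‖ := by
                  rw [_root_.sub_sub_cancel]
              _ ≤ ‖u p‖ + ‖u p - u (p.1 - y, p.2)‖ := norm_sub_le _ _
          have h6 := hdiff y hk
          linarith
        exact mul_le_mul_of_nonneg_left h4 (hknn y)
    have hint1 : Integrable (fun y => k y • u p) volume := hki.smul_const (u p)
    have hrepr : u p - hMollify ρ ε u p = ∫ y, k y • (u p - u (p.1 - y, p.2)) := by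
      have he : (fun y => k y • (u p - u (p.1 - y, p.2)))
          = fun y => k y • u p - k y • u (p.1 - y, p.2) := by
        funext y; rw [smul_sub]
      rw [he, integral_sub hint1 hint2, integral_smul_const, hk1, one_smul]
      rfl
    rw [hrepr]
    have hbd : ∀ y, ‖k y • (u p - u (p.1 - y, p.2))‖ ≤ k y * (M * ω ε) := by
      intro y
      rw [norm_smul, Real.norm_eq_abs, abs_of_nonneg (hknn y)]
      by_cases hk : k y = 0
      · simp [hk]
      · exact mul_le_mul_of_nonneg_left (hdiff y hk) (hknn y)
    calc ‖∫ y, k y • (u p - u (p.1 - y, p.2))‖ ≤ ∫ y, k y * (M * ω ε) :=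
        norm_integral_le_of_norm_le (hki.mul_const _) (Filter.Eventually.of_forall hbd)
      _ = M * ω ε := by rw [integral_mul_const, hk1, one_mul]
  -- the main ℝ≥0∞-valued quantities
  set Φ : HalfSpacePoint → ℝ≥0∞ := fun p => (‖u p - hMollify ρ ε u p‖₊ : ℝ≥0∞) with hΦdef
  set Ψ : HalfSpacePoint → ℝ :=
    fun p => √(∑ i : Fin 3, ‖hMollifyGrad ρ ε g p (dir i)‖ ^ 2) with hΨdef
  set U : ℝ≥0∞ := ∫⁻ p, (‖u p‖₊ : ℝ≥0∞) ^ (2:ℝ) ∂μ with hUdef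
  set GG : ℝ≥0∞ := ∫⁻ p, ∑ i : Fin 3, (‖g p (dir i)‖₊ : ℝ≥0∞) ^ (2:ℝ) ∂μ with hGGdef
  -- measurability
  have hMu' : StronglyMeasurable (fun p => hMollify ρ ε u' p) := SM_hMollify hρc u' hu'sm
  have hMg' : StronglyMeasurable (fun p => hMollifyGrad ρ ε g' p) := SM_hMollify hρc g' hg'sm
  have hAESM_Mu : AEStronglyMeasurable (fun p => hMollify ρ ε u p) μ :=
    hMu'.aestronglyMeasurable.congr (Filter.EventuallyEq.symm E1)
  have hAESM_a : AEStronglyMeasurable (fun p => u p - hMollify ρ ε u p) μ :=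
    hu_L2.1.sub hAESM_Mu
  have hΦm : AEMeasurable Φ μ := hAESM_a.enorm
  have hAESM_G : AEStronglyMeasurable (fun p => hMollifyGrad ρ ε g p) μ :=
    hMg'.aestronglyMeasurable.congr (Filter.EventuallyEq.symm E2)
  have hGi : ∀ i : Fin 3,
      AEStronglyMeasurable (fun p => hMollifyGrad ρ ε g p (dir i)) μ := fun i =>
    (ContinuousLinearMap.apply ℝ (EuclideanSpace ℝ (Fin 3))
      (dir i)).continuous.comp_aestronglyMeasurable hAESM_G
  have hΨm : AEMeasurable Ψ μ := by
    have hsum : AEMeasurable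
        (fun p => ∑ i : Fin 3, ‖hMollifyGrad ρ ε g p (dir i)‖ ^ 2) μ := by
      apply Finset.aemeasurable_fun_sum
      intro i _
      exact ((hGi i).norm.aemeasurable.pow_const 2)
    exact (Real.continuous_sqrt.measurable.comp_aemeasurable hsum)
  -- pointwise bound on the integrand
  have hS : ∀ᵐ p ∂μ, (‖S p‖₊ : ℝ≥0∞)
      ≤ ENNReal.ofReal (M * ω ε) * (Φ p * ENNReal.ofReal (Ψ p)) := by
    filter_upwards [hC] with p hp
    have hpw := pw_bound (u p - hMollify ρ ε u p)
      (fun i => hMollifyGrad ρ ε g p (dir i))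
    have hsum_eq : S p = ∑ i : Fin 3, ∑ j : Fin 3,
        (u p - hMollify ρ ε u p) i * (u p - hMollify ρ ε u p) j *
          hMollifyGrad ρ ε g p (dir i) j := by
      simp [hSdef]
    have habs : |S p| ≤ (M * ω ε) * (‖u p - hMollify ρ ε u p‖ * Ψ p) := by
      rw [hsum_eq]
      calc |∑ i : Fin 3, ∑ j : Fin 3,
            (u p - hMollify ρ ε u p) i * (u p - hMollify ρ ε u p) j *
              hMollifyGrad ρ ε g p (dir i) j|
          ≤ ‖u p - hMollify ρ ε u p‖ * ‖u p - hMollify ρ ε u p‖ * Ψ p := hpw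
        _ ≤ (M * ω ε) * ‖u p - hMollify ρ ε u p‖ * Ψ p := by
            apply mul_le_mul_of_nonneg_right _ (Real.sqrt_nonneg _)
            exact mul_le_mul_of_nonneg_right hp (norm_nonneg _)
        _ = (M * ω ε) * (‖u p - hMollify ρ ε u p‖ * Ψ p) := by ring
    calc (‖S p‖₊ : ℝ≥0∞) = ENNReal.ofReal |S p| := by
          rw [← ofReal_norm_eq_coe_nnnorm, Real.norm_eq_abs]
      _ ≤ ENNReal.ofReal ((M * ω ε) * (‖u p - hMollify ρ ε u p‖ * Ψ p)) :=
          ENNReal.ofReal_le_ofReal habs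
      _ = ENNReal.ofReal (M * ω ε) * (Φ p * ENNReal.ofReal (Ψ p)) := by
          rw [ENNReal.ofReal_mul (mul_nonneg hM (hω_nonneg ε)),
            ENNReal.ofReal_mul (norm_nonneg _), ofReal_norm_eq_coe_nnnorm]
  -- Hölder
  have hHold : ∫⁻ p, Φ p * ENNReal.ofReal (Ψ p) ∂μ
      ≤ (∫⁻ p, Φ p ^ (2:ℝ) ∂μ) ^ (1/2:ℝ)
        * (∫⁻ p, (ENNReal.ofReal (Ψ p)) ^ (2:ℝ) ∂μ) ^ (1/2:ℝ) := by
    have hconj : Real.HolderConjugate 2 2 := .two_two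
    have := ENNReal.lintegral_mul_le_Lp_mul_Lq μ hconj hΦm hΨm.ennreal_ofReal
    simpa using this
  -- first factor
  have hMuU : ∫⁻ p, (‖hMollify ρ ε u p‖₊ : ℝ≥0∞) ^ (2:ℝ) ∂μ ≤ U := by
    calc ∫⁻ p, (‖hMollify ρ ε u p‖₊ : ℝ≥0∞) ^ (2:ℝ) ∂μ
        = ∫⁻ p, (‖hMollify ρ ε u' p‖₊ : ℝ≥0∞) ^ (2:ℝ) ∂μ := by
          apply lintegral_congr_ae
          filter_upwards [E1] with p hp; rw [hp]
      _ ≤ ∫⁻ p in halfSpace,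
            (∫⁻ y, ENNReal.ofReal (kernel2 ρ ε y) * (‖u' (p.1 - y, p.2)‖₊ : ℝ≥0∞)) ^ (2:ℝ) := by
          apply lintegral_mono
          intro p
          exact ENNReal.rpow_le_rpow (MB hρ_nonneg hε0 u' p) (by norm_num)
      _ ≤ ∫⁻ p in halfSpace, (‖u' p‖₊ : ℝ≥0∞) ^ (2:ℝ) :=
          JF hρc hρ_nonneg hρ_supp hε0 hρ_int u' hu'sm
      _ = U := by
          apply lintegral_congr_ae
          filter_upwards [hue] with p hp; rw [hp]
  have hΦ2 : (∫⁻ p, Φ p ^ (2:ℝ) ∂μ) ^ (1/2:ℝ) ≤ 2 * U ^ (1/2:ℝ) := by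
    have hmono : ∀ p, Φ p ≤ (‖u p‖₊ : ℝ≥0∞) + (‖hMollify ρ ε u p‖₊ : ℝ≥0∞) := by
      intro p
      show (‖u p - hMollify ρ ε u p‖₊ : ℝ≥0∞)
        ≤ (‖u p‖₊ : ℝ≥0∞) + (‖hMollify ρ ε u p‖₊ : ℝ≥0∞)
      exact_mod_cast nnnorm_sub_le _ _
    have hmink := ENNReal.lintegral_Lp_add_le (μ := μ)
      (f := fun p => (‖u p‖₊ : ℝ≥0∞)) (g := fun p => (‖hMollify ρ ε u p‖₊ : ℝ≥0∞))
      (hu_L2.1.enorm) (hAESM_Mu.enorm) (by norm_num : (1:ℝ) ≤ 2)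
    calc (∫⁻ p, Φ p ^ (2:ℝ) ∂μ) ^ (1/2:ℝ)
        ≤ (∫⁻ p, ((‖u p‖₊ : ℝ≥0∞) + (‖hMollify ρ ε u p‖₊ : ℝ≥0∞)) ^ (2:ℝ) ∂μ) ^ (1/2:ℝ) := by
          apply ENNReal.rpow_le_rpow _ (by norm_num)
          apply lintegral_mono
          intro p
          exact ENNReal.rpow_le_rpow (hmono p) (by norm_num)
      _ ≤ (∫⁻ p, (‖u p‖₊ : ℝ≥0∞) ^ (2:ℝ) ∂μ) ^ (1/2:ℝ)
            + (∫⁻ p, (‖hMollify ρ ε u p‖₊ : ℝ≥0∞) ^ (2:ℝ) ∂μ) ^ (1/2:ℝ) := hmink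
      _ ≤ U ^ (1/2:ℝ) + U ^ (1/2:ℝ) := by
          apply add_le_add
          · exact le_of_eq rfl
          · exact ENNReal.rpow_le_rpow hMuU (by norm_num)
      _ = 2 * U ^ (1/2:ℝ) := by ring
  -- second factor
  have hΨ2 : (∫⁻ p, (ENNReal.ofReal (Ψ p)) ^ (2:ℝ) ∂μ) ^ (1/2:ℝ) ≤ GG ^ (1/2:ℝ) := by
    apply ENNReal.rpow_le_rpow _ (by norm_num)
    have hpt : ∀ p, (ENNReal.ofReal (Ψ p)) ^ (2:ℝ)
        = ∑ i : Fin 3, (‖hMollifyGrad ρ ε g p (dir i)‖₊ : ℝ≥0∞) ^ (2:ℝ) := by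
      intro p
      have hΨnn : (0:ℝ) ≤ Ψ p := Real.sqrt_nonneg _
      have h1 : (ENNReal.ofReal (Ψ p)) ^ (2:ℝ) = ENNReal.ofReal (Ψ p ^ 2) := by
        rw [show (2:ℝ) = ((2:ℕ):ℝ) by norm_num, ENNReal.rpow_natCast,
          ← ENNReal.ofReal_pow hΨnn]
      have h2 : Ψ p ^ 2 = ∑ i : Fin 3, ‖hMollifyGrad ρ ε g p (dir i)‖ ^ 2 :=
        Real.sq_sqrt (by positivity)
      rw [h1, h2]
      rw [ENNReal.ofReal_sum_of_nonneg (fun i _ => by positivity)]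
      apply Finset.sum_congr rfl; intro i _
      rw [ENNReal.ofReal_pow (norm_nonneg _), ofReal_norm_eq_coe_nnnorm,
        show (2:ℝ) = ((2:ℕ):ℝ) by norm_num, ENNReal.rpow_natCast]
    calc ∫⁻ p, (ENNReal.ofReal (Ψ p)) ^ (2:ℝ) ∂μ
        = ∫⁻ p, ∑ i : Fin 3, (‖hMollifyGrad ρ ε g p (dir i)‖₊ : ℝ≥0∞) ^ (2:ℝ) ∂μ :=
          lintegral_congr hpt
      _ = ∑ i : Fin 3, ∫⁻ p, (‖hMollifyGrad ρ ε g p (dir i)‖₊ : ℝ≥0∞) ^ (2:ℝ) ∂μ :=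
          lintegral_finset_sum' _ (fun i _ => ((hGi i).enorm.pow_const _))
      _ ≤ ∑ i : Fin 3, ∫⁻ p, (‖g p (dir i)‖₊ : ℝ≥0∞) ^ (2:ℝ) ∂μ := by
          apply Finset.sum_le_sum
          intro i _
          calc ∫⁻ p, (‖hMollifyGrad ρ ε g p (dir i)‖₊ : ℝ≥0∞) ^ (2:ℝ) ∂μ
              = ∫⁻ p, (‖hMollifyGrad ρ ε g' p (dir i)‖₊ : ℝ≥0∞) ^ (2:ℝ) ∂μ := by
                apply lintegral_congr_ae; filter_upwards [E2] with p hp; rw [hp]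
            _ ≤ ∫⁻ p in halfSpace,
                  (∫⁻ y, ENNReal.ofReal (kernel2 ρ ε y)
                    * (‖g' (p.1 - y, p.2) (dir i)‖₊ : ℝ≥0∞)) ^ (2:ℝ) := by
                apply lintegral_mono; intro p
                exact ENNReal.rpow_le_rpow (MBgrad hρ_nonneg hε0 g' p (dir i)) (by norm_num)
            _ ≤ ∫⁻ p in halfSpace, (‖g' p (dir i)‖₊ : ℝ≥0∞) ^ (2:ℝ) :=
                JF hρc hρ_nonneg hρ_supp hε0 hρ_int (fun q => g' q (dir i))
                  ((ContinuousLinearMap.apply ℝ (EuclideanSpace ℝ (Fin 3))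
                    (dir i)).continuous.comp_stronglyMeasurable hg'sm)
            _ = ∫⁻ p, (‖g p (dir i)‖₊ : ℝ≥0∞) ^ (2:ℝ) ∂μ := by
                apply lintegral_congr_ae; filter_upwards [hge] with p hp; rw [hp]
      _ = GG :=
          (lintegral_finset_sum' _ (fun i _ =>
            (((ContinuousLinearMap.apply ℝ (EuclideanSpace ℝ (Fin 3))
              (dir i)).continuous.comp_aestronglyMeasurable hg_L2.1).enorm.pow_const _))).symm
  -- finiteness
  have hUne : U ≠ ∞ := lintegral_sq_ne_top hu_L2
  have hGGne : GG ≠ ∞ := by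
    have hle : GG ≤ 3 * ∫⁻ p, (‖g p‖₊ : ℝ≥0∞) ^ (2:ℝ) ∂μ := by
      rw [hGGdef, ← lintegral_const_mul' _ _ (by norm_num : (3:ℝ≥0∞) ≠ ∞)]
      apply lintegral_mono
      intro p
      have hbd : ∀ i : Fin 3,
          (‖g p (dir i)‖₊ : ℝ≥0∞) ^ (2:ℝ) ≤ (‖g p‖₊ : ℝ≥0∞) ^ (2:ℝ) := by
        intro i
        apply ENNReal.rpow_le_rpow _ (by norm_num)
        rw [ENNReal.coe_le_coe]
        have h1 : ‖g p (dir i)‖ ≤ ‖g p‖ := by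
          calc ‖g p (dir i)‖ ≤ ‖g p‖ * ‖dir i‖ := (g p).le_opNorm _
            _ ≤ ‖g p‖ * 1 := mul_le_mul_of_nonneg_left (dir_norm_le i) (norm_nonneg _)
            _ = ‖g p‖ := mul_one _
        rwa [← coe_nnnorm, ← coe_nnnorm, NNReal.coe_le_coe] at h1
      calc ∑ i : Fin 3, (‖g p (dir i)‖₊ : ℝ≥0∞) ^ (2:ℝ)
          ≤ ∑ _i : Fin 3, (‖g p‖₊ : ℝ≥0∞) ^ (2:ℝ) := Finset.sum_le_sum (fun i _ => hbd i)
        _ = 3 * (‖g p‖₊ : ℝ≥0∞) ^ (2:ℝ) := by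
            rw [Finset.sum_const, Finset.card_univ, Fintype.card_fin]
            rw [nsmul_eq_mul]; norm_num
    intro htop
    rw [htop, top_le_iff] at hle
    exact (ENNReal.mul_ne_top (by norm_num) (lintegral_sq_ne_top hg_L2)) hle
  -- real/ENNReal conversions for the right-hand side
  have hUreal : ∫ p in halfSpace, ‖u p‖ ^ 2 = U.toReal := integral_norm_sq_eq hu_L2.1
  have hGreal : ∫ p in halfSpace, ∑ i : Fin 3, ‖g p (dir i)‖ ^ 2 = GG.toReal := by
    have hsm : AEStronglyMeasurable (fun p => ∑ i : Fin 3, ‖g p (dir i)‖ ^ 2) μ := by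
      apply Finset.aestronglyMeasurable_fun_sum
      intro i _
      have hgi : AEStronglyMeasurable (fun p => g p (dir i)) μ :=
        (ContinuousLinearMap.apply ℝ (EuclideanSpace ℝ (Fin 3))
          (dir i)).continuous.comp_aestronglyMeasurable hg_L2.1
      have he : (fun p => ‖g p (dir i)‖ ^ 2) = fun p => ‖g p (dir i)‖ * ‖g p (dir i)‖ := by
        funext p; ring
      rw [he]; exact hgi.norm.mul hgi.norm
    rw [integral_eq_lintegral_of_nonneg_ae
      (Filter.Eventually.of_forall fun p => by positivity) hsm]
    congr 1
    apply lintegral_congr; intro p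
    rw [ENNReal.ofReal_sum_of_nonneg (fun i _ => by positivity)]
    apply Finset.sum_congr rfl; intro i _
    rw [ENNReal.ofReal_pow (norm_nonneg _), ofReal_norm_eq_coe_nnnorm,
      show (2:ℝ) = ((2:ℕ):ℝ) by norm_num, ENNReal.rpow_natCast]
  -- assemble
  have hInt_u2 : (0:ℝ) ≤ ∫ p in halfSpace, ‖u p‖ ^ 2 :=
    integral_nonneg fun p => by positivity
  have hInt_g2 : (0:ℝ) ≤ ∫ p in halfSpace, ∑ i : Fin 3, ‖g p (dir i)‖ ^ 2 :=
    integral_nonneg fun p => by positivity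
  have h0 : |∫ p in halfSpace, S p| ≤ (∫⁻ p, (‖S p‖₊ : ℝ≥0∞) ∂μ).toReal := by
    rw [← Real.norm_eq_abs]
    refine le_trans (norm_integral_le_lintegral_norm (μ := μ) S) ?_
    apply le_of_eq
    congr 1
    apply lintegral_congr; intro a
    rw [ofReal_norm_eq_coe_nnnorm]
  apply le_trans h0
  have hRHSnn : (0:ℝ) ≤ 2 * M * ω ε * (∫ p in halfSpace, ‖u p‖ ^ 2) ^ ((1:ℝ)/2) *
      (∫ p in halfSpace, ∑ i : Fin 3, ‖g p (dir i)‖ ^ 2) ^ ((1:ℝ)/2) := by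
    apply mul_nonneg
    apply mul_nonneg
    apply mul_nonneg
    apply mul_nonneg
    · norm_num
    · exact hM
    · exact hω_nonneg ε
    · exact Real.rpow_nonneg hInt_u2 _
    · exact Real.rpow_nonneg hInt_g2 _
  apply ENNReal.toReal_le_of_le_ofReal hRHSnn
  have hA : ENNReal.ofReal (U.toReal ^ ((1:ℝ)/2)) = U ^ (1/2:ℝ) := by
    rw [ENNReal.toReal_rpow, ENNReal.ofReal_toReal
      (ENNReal.rpow_ne_top_of_nonneg (by norm_num) hUne)]
  have hB : ENNReal.ofReal (GG.toReal ^ ((1:ℝ)/2)) = GG ^ (1/2:ℝ) := by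
    rw [ENNReal.toReal_rpow, ENNReal.ofReal_toReal
      (ENNReal.rpow_ne_top_of_nonneg (by norm_num) hGGne)]
  calc ∫⁻ p, (‖S p‖₊ : ℝ≥0∞) ∂μ
      ≤ ∫⁻ p, ENNReal.ofReal (M * ω ε) * (Φ p * ENNReal.ofReal (Ψ p)) ∂μ :=
        lintegral_mono_ae hS
    _ = ENNReal.ofReal (M * ω ε) * ∫⁻ p, Φ p * ENNReal.ofReal (Ψ p) ∂μ :=
        lintegral_const_mul' _ _ ENNReal.ofReal_ne_top
    _ ≤ ENNReal.ofReal (M * ω ε) * ((∫⁻ p, Φ p ^ (2:ℝ) ∂μ) ^ (1/2:ℝ)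
          * (∫⁻ p, (ENNReal.ofReal (Ψ p)) ^ (2:ℝ) ∂μ) ^ (1/2:ℝ)) :=
        mul_le_mul_right hHold _
    _ ≤ ENNReal.ofReal (M * ω ε) * ((2 * U ^ (1/2:ℝ)) * GG ^ (1/2:ℝ)) :=
        mul_le_mul_right (mul_le_mul' hΦ2 hΨ2) _
    _ = ENNReal.ofReal (2 * M * ω ε
          * (∫ p in halfSpace, ‖u p‖ ^ 2) ^ ((1:ℝ)/2)
          * (∫ p in halfSpace, ∑ i : Fin 3, ‖g p (dir i)‖ ^ 2) ^ ((1:ℝ)/2)) := by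
        rw [hUreal, hGreal]
        rw [show 2 * M * ω ε * U.toReal ^ ((1:ℝ)/2) * GG.toReal ^ ((1:ℝ)/2)
            = (M * ω ε) * (2 * (U.toReal ^ ((1:ℝ)/2) * GG.toReal ^ ((1:ℝ)/2))) by ring]
        rw [ENNReal.ofReal_mul (mul_nonneg hM (hω_nonneg ε)),
          ENNReal.ofReal_mul (by norm_num : (0:ℝ) ≤ 2),
          ENNReal.ofReal_mul (by positivity),
          ENNReal.ofReal_ofNat,
          ENNReal.ofReal_mul (Real.rpow_nonneg ENNReal.toReal_nonneg _), hA, hB]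
        ring
end
end
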